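/- arXiv:1704.00356 — 2 statements merged into one kernel-verified Lean document; each statement's English description precedes it below -/
import Mathlib

section
/- Consider a PJR-Exact run of an approval-based multi-winner election, fix j with 0 ≤ j ≤ k−1, and suppose the first j iterations of the run are all normal (j = 0 meaning no iteration has been executed yet). If after these j iterations some candidate c_1 ∈ C \ W_j is in an eager state, then there exists another candidate c_2 ∈ C \ W_j that is in a normal state. -/
open Finset

variable {C : Type*} [Fintype C] [DecidableEq C]

/-- The voters approving candidate `c`. -/
def approvers {n : ℕ} (A : Fin n → Finset C) (c : C) : Finset (Fin n) :=
  Finset.univ.filter (fun i => c ∈ A i)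

/-- The exact quota `q = n / k`. -/
def quota (n k : ℕ) : ℚ := (n : ℚ) / (k : ℚ)

/-- Remaining support of candidate `c` under vote fractions `f`. -/
def supp {n : ℕ} (A : Fin n → Finset C) (f : Fin n → ℚ) (c : C) : ℚ :=
  ∑ i ∈ approvers A c, f i

/-- The set `W_j = {w_1, …, w_j}` of the first `j` winners. -/
def Wset (w : ℕ → C) (j : ℕ) : Finset C := (Finset.Icc 1 j).image w

/-- The candidates approved by every voter in `Ns`, i.e. `⋂_{i ∈ Ns} A i`. -/
def commonApproved {n : ℕ} (A : Fin n → Finset C) (Ns : Finset (Fin n)) : Finset C :=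
  Finset.univ.filter (fun c => ∀ i ∈ Ns, c ∈ A i)

/-- `Ns` is an `ℓ`-cohesive group of voters: `|Ns| ≥ ℓ·n/k` and `|⋂_{i ∈ Ns} A i| ≥ ℓ`. -/
def Cohesive {n : ℕ} (A : Fin n → Finset C) (k ℓ : ℕ) (Ns : Finset (Fin n)) : Prop :=
  (ℓ : ℚ) * (n : ℚ) / (k : ℚ) ≤ (Ns.card : ℚ) ∧ ℓ ≤ (commonApproved A Ns).card

/-- `W` provides proportional justified representation for `(A, k)`. -/
def ProvidesPJR {n : ℕ} (A : Fin n → Finset C) (k : ℕ) (W : Finset C) : Prop :=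
  ∀ ℓ : ℕ, 1 ≤ ℓ → ℓ ≤ k → ∀ Ns : Finset (Fin n), Cohesive A k ℓ Ns →
    ℓ ≤ (W ∩ Ns.biUnion A).card

/-- `W` provides extended justified representation for `(A, k)`. -/
def ProvidesEJR {n : ℕ} (A : Fin n → Finset C) (k : ℕ) (W : Finset C) : Prop :=
  ∀ ℓ : ℕ, 1 ≤ ℓ → ℓ ≤ k → ∀ Ns : Finset (Fin n), Cohesive A k ℓ Ns →
    ∃ i ∈ Ns, ℓ ≤ (A i ∩ W).card

/-- The set of `ℓ`'s satisfying the dissatisfaction-level fixpoint equation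
`ℓ = ⌊(k/n)·|{i : c ∈ A_i ∧ |A_i ∩ W| < ℓ}|⌋`
(natural-number division `k * m / n` is exactly the floor `⌊(k/n)·m⌋`). -/
def dissatSet {n : ℕ} (A : Fin n → Finset C) (k : ℕ) (W : Finset C) (c : C) : Set ℕ :=
  {ℓ : ℕ | ℓ = k * (Finset.univ.filter (fun i => c ∈ A i ∧ (A i ∩ W).card < ℓ)).card / n}

/-- The dissatisfaction level `ℓ(c, W)`: the largest non-negative integer satisfying
the fixpoint equation. -/
noncomputable def dissat {n : ℕ} (A : Fin n → Finset C) (k : ℕ) (W : Finset C) (c : C) : ℕ :=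
  sSup (dissatSet A k W c)

/-- `ℓ_W(i, c) = max_{c' ∈ A_i \ (W ∪ {c})} ℓ(c', W)` (with `max ∅ = 0`). -/
noncomputable def dissatVoter {n : ℕ} (A : Fin n → Finset C) (k : ℕ) (W : Finset C)
    (i : Fin n) (c : C) : ℕ :=
  (A i \ insert c W).sup (dissat A k W)

/-- `ℓ_W(i) = max_{c ∈ A_i \ W} ℓ(c, W)` (with `max ∅ = 0`). -/
noncomputable def dissatVoterAll {n : ℕ} (A : Fin n → Finset C) (k : ℕ) (W : Finset C)
    (i : Fin n) : ℕ :=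
  (A i \ W).sup (dissat A k W)

/-- `g_i(c)` relative to the committee `W`. -/
noncomputable def gfun {n : ℕ} (A : Fin n → Finset C) (k : ℕ) (W : Finset C)
    (i : Fin n) (c : C) : ℚ :=
  if dissatVoter A k W i c ≤ (A i ∩ W).card then 0
  else ((dissatVoter A k W i c : ℚ) - ((A i ∩ W).card : ℚ) - 1) / (dissatVoter A k W i c : ℚ)

/-- Candidate `c ∉ W` is in a normal state (w.r.t. committee `W` and fractions `f`). -/
def NormalState {n : ℕ} (A : Fin n → Finset C) (k : ℕ) (f : Fin n → ℚ) (W : Finset C)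
    (c : C) : Prop :=
  (∀ i : Fin n, c ∈ A i → (A i ∩ W).card < dissatVoter A k W i c →
      ((dissatVoter A k W i c : ℚ) - ((A i ∩ W).card : ℚ)) / (dissatVoter A k W i c : ℚ) ≤ f i) ∧
  quota n k ≤ ∑ i ∈ approvers A c, (f i - gfun A k W i c)

/-- Candidate `c ∉ W` is in a starving state. -/
def StarvingState {n : ℕ} (A : Fin n → Finset C) (k : ℕ) (f : Fin n → ℚ) (W : Finset C)
    (c : C) : Prop :=
  ∃ i : Fin n, c ∈ A i ∧ (A i ∩ W).card < dissatVoter A k W i c ∧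
    f i < ((dissatVoter A k W i c : ℚ) - ((A i ∩ W).card : ℚ)) / (dissatVoter A k W i c : ℚ)

/-- Candidate `c ∉ W` is in an eager state. -/
def EagerState {n : ℕ} (A : Fin n → Finset C) (k : ℕ) (f : Fin n → ℚ) (W : Finset C)
    (c : C) : Prop :=
  ¬ StarvingState A k f W c ∧ quota n k ≤ supp A f c ∧
    ∑ i ∈ approvers A c, (f i - gfun A k W i c) < quota n k

/-- A run of a voting rule in the PJR-Exact family: a sequence of distinct winners
`w 1, …, w k` together with fraction functions `f 0, …, f k` satisfying the three
defining conditions of the family. -/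
structure PJRExactRun (n k : ℕ) (A : Fin n → Finset C) where
  w : ℕ → C
  f : ℕ → Fin n → ℚ
  /-- the selected candidates are pairwise distinct -/
  w_inj : ∀ j j' : ℕ, 1 ≤ j → j ≤ k → 1 ≤ j' → j' ≤ k → w j = w j' → j = j'
  /-- initially each voter has her whole vote -/
  f_zero : ∀ i, f 0 i = 1
  /-- fractions stay non-negative -/
  f_nonneg : ∀ j, 1 ≤ j → j ≤ k → ∀ i, 0 ≤ f j i
  /-- fractions never increase -/
  f_mono : ∀ j, 1 ≤ j → j ≤ k → ∀ i, f j i ≤ f (j - 1) i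
  /-- if the remaining support of the winner exceeds the quota, exactly `q` votes are removed -/
  remove_big : ∀ j, 1 ≤ j → j ≤ k → quota n k < supp A (f (j - 1)) (w j) →
    ∑ i ∈ approvers A (w j), (f (j - 1) i - f j i) = quota n k
  /-- if the remaining support of the winner is at most the quota, all of it is removed -/
  remove_small : ∀ j, 1 ≤ j → j ≤ k → supp A (f (j - 1)) (w j) ≤ quota n k →
    ∀ i, w j ∈ A i → f j i = 0
  /-- voters not approving the winner keep their fractions -/
  f_untouched : ∀ j, 1 ≤ j → j ≤ k → ∀ i, w j ∉ A i → f j i = f (j - 1) i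
  /-- if some unelected candidate has remaining support at least `q`,
  then so has the selected one -/
  greedy : ∀ j, 1 ≤ j → j ≤ k →
    (∃ c, c ∉ Wset w (j - 1) ∧ quota n k ≤ supp A (f (j - 1)) c) →
    quota n k ≤ supp A (f (j - 1)) (w j)

/-- Iteration `j` of a PJR-Exact run is normal. -/
def NormalIteration {n k : ℕ} {A : Fin n → Finset C} (R : PJRExactRun n k A) (j : ℕ) : Prop :=
  NormalState A k (R.f (j - 1)) (Wset R.w (j - 1)) (R.w j) ∧
  ∀ i : Fin n, R.w j ∈ A i →
    (A i ∩ Wset R.w (j - 1)).card < dissatVoter A k (Wset R.w (j - 1)) i (R.w j) →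
    ((dissatVoter A k (Wset R.w (j - 1)) i (R.w j) : ℚ) - ((A i ∩ Wset R.w j).card : ℚ)) /
      (dissatVoter A k (Wset R.w (j - 1)) i (R.w j) : ℚ) ≤ R.f j i

/-!
Let `m` be the largest dissatisfaction level among unelected candidates and `c₀` a candidate
attaining it; `m ≥ 1` because the eager candidate has a voter with `g_i > 0`. Normal iterations
preserve the invariant that every voter `i` keeps at least `(ℓ(i) - |A_i ∩ W|) / ℓ(i)` of her vote,
where `ℓ(i)` is the largest level among her unelected candidates: dissatisfaction levels only drop
as the committee grows, and `(ℓ - a) / ℓ` is monotone in `ℓ`. For a supporter `i` of `c₀` this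
invariant makes `f_i - g_i(c₀) ≥ 1/m` whenever `|A_i ∩ W| < m`, and the fixpoint equation for `m`
says there are at least `m·n/k` such supporters, so `c₀` collects at least `q` and is normal.
The eager candidate is not normal, so `c₀` differs from it.
-/

section

variable {C : Type*} [DecidableEq C]

theorem sub_div_le_sub_div_of_le {α : Type*} [Field α] [LinearOrder α] [IsStrictOrderedRing α]
    {a L M : α} (ha : 0 ≤ a) (hL : 0 < L) (hLM : L ≤ M) : (L - a) / L ≤ (M - a) / M := by
  rw [sub_div, sub_div, div_self hL.ne', div_self (hL.trans_le hLM).ne']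
  gcongr

theorem le_sSup_setOf_eq_of_le_apply {F : ℕ → ℕ} (hF : Monotone F) {b : ℕ} (hb : ∀ ℓ, F ℓ ≤ b)
    {ℓ : ℕ} (h : ℓ ≤ F ℓ) : ℓ ≤ sSup {x | x = F x} := by
  set T : Set ℕ := {x | x ≤ F x}
  have hT : BddAbove T := ⟨b, fun x hx => hx.trans (hb x)⟩
  have hsup : sSup T ≤ F (sSup T) := Nat.sSup_mem ⟨ℓ, h⟩ hT
  have hfix : sSup T = F (sSup T) := le_antisymm hsup (le_csSup hT (hF hsup))
  have hfixB : BddAbove {x | x = F x} := ⟨b, fun x (hx : x = F x) => hx.trans_le (hb x)⟩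
  exact (le_csSup hT h).trans (le_csSup hfixB hfix)

section Dissatisfaction

variable {n : ℕ} (A : Fin n → Finset C) (k : ℕ)

def underserved (W : Finset C) (c : C) (ℓ : ℕ) : Finset (Fin n) :=
  univ.filter (fun i => c ∈ A i ∧ (A i ∩ W).card < ℓ)

theorem underserved_subset_approvers (W : Finset C) (c : C) (ℓ : ℕ) :
    underserved A W c ℓ ⊆ approvers A c :=
  fun _ hi => mem_filter.mpr ⟨mem_univ _, (mem_filter.mp hi).2.1⟩

theorem monotone_card_underserved (W : Finset C) (c : C) :
    Monotone fun ℓ => k * (underserved A W c ℓ).card / n := fun _ _ h =>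
  Nat.div_le_div_right <| Nat.mul_le_mul_left k <| card_le_card fun _ hi => by
    simp only [underserved, mem_filter] at hi ⊢
    exact ⟨hi.1, hi.2.1, hi.2.2.trans_le h⟩

theorem mul_card_underserved_div_le (W : Finset C) (c : C) (ℓ : ℕ) :
    k * (underserved A W c ℓ).card / n ≤ k :=
  Nat.div_le_of_le_mul <| by
    rw [mul_comm n]
    exact Nat.mul_le_mul_left k ((card_le_univ _).trans (Fintype.card_fin n).le)

theorem dissat_eq (W : Finset C) (c : C) :
    dissat A k W c = k * (underserved A W c (dissat A k W c)).card / n :=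
  Nat.sSup_mem (s := dissatSet A k W c) ⟨0, by simp [dissatSet]⟩
    ⟨k, fun ℓ (hℓ : ℓ = _) => hℓ.trans_le (mul_card_underserved_div_le A k W c ℓ)⟩

theorem le_dissat_of_le {W : Finset C} {c : C} {ℓ : ℕ}
    (h : ℓ ≤ k * (underserved A W c ℓ).card / n) : ℓ ≤ dissat A k W c :=
  le_sSup_setOf_eq_of_le_apply (monotone_card_underserved A k W c)
    (mul_card_underserved_div_le A k W c) h

theorem dissat_anti {W W' : Finset C} (hW : W ⊆ W') (c : C) :
    dissat A k W' c ≤ dissat A k W c := by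
  refine le_dissat_of_le A k ((dissat_eq A k W' c).trans_le ?_)
  refine Nat.div_le_div_right <| Nat.mul_le_mul_left k <| card_le_card fun i hi => ?_
  simp only [underserved, mem_filter] at hi ⊢
  exact ⟨hi.1, hi.2.1, (card_le_card (inter_subset_inter_left hW)).trans_lt hi.2.2⟩

theorem quota_mul_dissat_le_card (W : Finset C) (c : C) :
    quota n k * dissat A k W c ≤ (underserved A W c (dissat A k W c)).card := by
  set m := dissat A k W c
  have hmn : m * n ≤ k * (underserved A W c m).card := by
    conv_lhs => rw [show m = _ from dissat_eq A k W c]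
    exact Nat.div_mul_le_self _ _
  rw [quota, div_mul_eq_mul_div, mul_comm (n : ℚ)]
  exact div_le_of_le_mul₀ k.cast_nonneg (Nat.cast_nonneg _)
    (by exact_mod_cast hmn.trans_eq (mul_comm _ _))

theorem dissatVoter_le_dissatVoterAll (W : Finset C) (i : Fin n) (c : C) :
    dissatVoter A k W i c ≤ dissatVoterAll A k W i :=
  sup_mono (sdiff_subset_sdiff subset_rfl (subset_insert c W))

theorem dissatVoterAll_insert_le (W : Finset C) (i : Fin n) (w : C) :
    dissatVoterAll A k (insert w W) i ≤ dissatVoter A k W i w :=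
  sup_mono_fun fun c _ => dissat_anti A k (subset_insert w W) c

end Dissatisfaction

section Unstarved

variable {n : ℕ} {A : Fin n → Finset C} {k : ℕ} {f : Fin n → ℚ} {W : Finset C}

def Unstarved (A : Fin n → Finset C) (k : ℕ) (f : Fin n → ℚ) (W : Finset C) : Prop :=
  ∀ i : Fin n, (A i ∩ W).card < dissatVoterAll A k W i →
    ((dissatVoterAll A k W i : ℚ) - ((A i ∩ W).card : ℚ)) / (dissatVoterAll A k W i : ℚ) ≤ f i

theorem Unstarved.le_of_lt_dissatVoterAll (hf : Unstarved A k f W) {i : Fin n} {L : ℕ}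
    (hL : (A i ∩ W).card < L) (hLi : L ≤ dissatVoterAll A k W i) :
    ((L : ℚ) - (A i ∩ W).card) / L ≤ f i :=
  (sub_div_le_sub_div_of_le (Nat.cast_nonneg _) (by exact_mod_cast (Nat.zero_le _).trans_lt hL)
    (by exact_mod_cast hLi)).trans (hf i (hL.trans_le hLi))

theorem Unstarved.one_div_le_sub_gfun (hf : Unstarved A k f W) {i : Fin n}
    (hi : (A i ∩ W).card < dissatVoterAll A k W i) (c : C) :
    1 / (dissatVoterAll A k W i : ℚ) ≤ f i - gfun A k W i c := by
  set L := dissatVoterAll A k W i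
  set ℓ := dissatVoter A k W i c
  set a := (A i ∩ W).card
  by_cases hℓ : ℓ ≤ a
  · have hfi := hf.le_of_lt_dissatVoterAll hi le_rfl
    have ha : (a : ℚ) + 1 ≤ L := by exact_mod_cast hi
    rw [gfun, if_pos hℓ, sub_zero]
    refine le_trans ?_ hfi
    gcongr
    linarith
  · rw [not_le] at hℓ
    have hℓ0 : (0 : ℚ) < ℓ := by exact_mod_cast (Nat.zero_le _).trans_lt hℓ
    have hfi := hf.le_of_lt_dissatVoterAll hℓ (dissatVoter_le_dissatVoterAll A k W i c)
    have hsub : ((ℓ : ℚ) - a) / ℓ - ((ℓ : ℚ) - a - 1) / ℓ = 1 / ℓ := by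
      rw [div_sub_div_same]; ring_nf
    rw [gfun, if_neg (not_le.mpr hℓ)]
    calc 1 / (L : ℚ) ≤ 1 / ℓ :=
          one_div_le_one_div_of_le hℓ0 (by exact_mod_cast dissatVoter_le_dissatVoterAll A k W i c)
      _ ≤ f i - ((ℓ : ℚ) - a - 1) / ℓ := by linarith

theorem Unstarved.sub_gfun_nonneg (hf : Unstarved A k f W) {i : Fin n} (hfi : 0 ≤ f i) (c : C) :
    0 ≤ f i - gfun A k W i c := by
  by_cases hi : (A i ∩ W).card < dissatVoterAll A k W i
  · exact le_trans (by positivity) (hf.one_div_le_sub_gfun hi c)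
  · have hℓ : dissatVoter A k W i c ≤ (A i ∩ W).card :=
      (dissatVoter_le_dissatVoterAll A k W i c).trans (not_lt.mp hi)
    rwa [gfun, if_pos hℓ, sub_zero]

theorem Unstarved.normalState_of_forall_dissat_le (hf : Unstarved A k f W) (hf0 : ∀ i, 0 ≤ f i)
    {c : C} (hc : c ∉ W) (hmax : ∀ i, c ∈ A i → dissatVoterAll A k W i ≤ dissat A k W c)
    (hpos : 0 < dissat A k W c) : NormalState A k f W c := by
  set m := dissat A k W c
  set S := underserved A W c m
  have hlevel : ∀ i, c ∈ A i → dissatVoterAll A k W i = m := fun i hci =>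
    le_antisymm (hmax i hci) (le_sup (f := dissat A k W) (mem_sdiff.mpr ⟨hci, hc⟩))
  refine ⟨fun i _ hi => hf.le_of_lt_dissatVoterAll hi (dissatVoter_le_dissatVoterAll A k W i c), ?_⟩
  have hm : (0 : ℚ) < m := by exact_mod_cast hpos
  have hS : ∀ i ∈ S, 1 / (m : ℚ) ≤ f i - gfun A k W i c := fun i hi => by
    obtain ⟨-, hci, him⟩ := mem_filter.mp hi
    rw [← hlevel i hci] at him ⊢
    exact hf.one_div_le_sub_gfun him c
  calc quota n k = quota n k * m * (1 / m) := by field_simp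
    _ ≤ S.card * (1 / m) := by gcongr; exact quota_mul_dissat_le_card A k W c
    _ ≤ ∑ i ∈ S, (f i - gfun A k W i c) := by
      simpa [nsmul_eq_mul] using card_nsmul_le_sum S _ _ hS
    _ ≤ ∑ i ∈ approvers A c, (f i - gfun A k W i c) :=
      sum_le_sum_of_subset_of_nonneg (underserved_subset_approvers A W c m)
        fun i _ _ => hf.sub_gfun_nonneg (hf0 i) c

end Unstarved

theorem exists_dissat_pos_of_sum_sub_gfun_lt {n k : ℕ} {A : Fin n → Finset C}
    {f : Fin n → ℚ} {W : Finset C} {c : C}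
    (h : ∑ i ∈ approvers A c, (f i - gfun A k W i c) < supp A f c) :
    ∃ i, ∃ c' ∈ A i, c' ∉ W ∧ 0 < dissat A k W c' := by
  obtain ⟨i, -, hi⟩ := exists_lt_of_sum_lt h
  have hpos : 0 < dissatVoter A k W i c := Nat.pos_of_ne_zero fun h0 => by simp [gfun, h0] at hi
  obtain ⟨c', hc', hc'pos⟩ := Finset.lt_sup_iff.mp hpos
  obtain ⟨hc'A, hc'W⟩ := mem_sdiff.mp hc'
  exact ⟨i, c', hc'A, fun h => hc'W (mem_insert_of_mem h), hc'pos⟩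

theorem Wset_succ (w : ℕ → C) (t : ℕ) : Wset w (t + 1) = insert (w (t + 1)) (Wset w t) := by
  rw [Wset, Wset, ← image_insert, insert_Icc_right_eq_Icc_add_one (Nat.le_add_left 1 t)]

namespace PJRExactRun

variable {n k : ℕ} {A : Fin n → Finset C} (R : PJRExactRun n k A)

theorem f_nonneg_of_le {j : ℕ} (hj : j ≤ k) (i : Fin n) : 0 ≤ R.f j i := by
  rcases Nat.eq_zero_or_pos j with rfl | hj0
  · simp [R.f_zero]
  · exact R.f_nonneg j hj0 hj i

theorem w_succ_notMem_Wset {t : ℕ} (ht : t + 1 ≤ k) : R.w (t + 1) ∉ Wset R.w t := by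
  simp only [Wset, mem_image, mem_Icc, not_exists, not_and]
  intro j ⟨hj, hjt⟩ hw
  have := R.w_inj j (t + 1) hj (by omega) (by omega) ht hw
  omega

theorem unstarved_succ {t : ℕ} (ht : t + 1 ≤ k) (hN : NormalIteration R (t + 1))
    (hinv : Unstarved A k (R.f t) (Wset R.w t)) :
    Unstarved A k (R.f (t + 1)) (Wset R.w (t + 1)) := by
  have hw := hN.2
  simp only [Nat.add_sub_cancel, Wset_succ] at hw
  intro i hi
  rw [Wset_succ] at hi ⊢
  set W := Wset R.w t
  set w := R.w (t + 1)
  have hL := dissatVoterAll_insert_le A k W i w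
  by_cases hwi : w ∈ A i
  · have hcard : (A i ∩ insert w W).card = (A i ∩ W).card + 1 := by
      rw [inter_insert_of_mem hwi,
        card_insert_of_notMem fun h => R.w_succ_notMem_Wset ht (mem_inter.mp h).2]
    rw [hcard] at hi
    exact (sub_div_le_sub_div_of_le (Nat.cast_nonneg _)
      (by exact_mod_cast (Nat.zero_le _).trans_lt hi) (by exact_mod_cast hL)).trans
      (hw i hwi (by omega))
  · rw [inter_insert_of_notMem hwi] at hi ⊢
    rw [R.f_untouched (t + 1) (by omega) ht i hwi, Nat.add_sub_cancel]
    exact hinv.le_of_lt_dissatVoterAll hi (hL.trans (dissatVoter_le_dissatVoterAll A k W i w))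

theorem unstarved {j : ℕ} (hj : j ≤ k) (hnormal : ∀ j', 1 ≤ j' → j' ≤ j → NormalIteration R j') :
    Unstarved A k (R.f j) (Wset R.w j) := by
  induction j with
  | zero =>
    intro i hi
    simp only [Wset, Icc_eq_empty_of_lt zero_lt_one, image_empty, inter_empty, card_empty,
      Nat.cast_zero, sub_zero, R.f_zero] at hi ⊢
    exact (div_self (by exact_mod_cast hi.ne')).le
  | succ t ih =>
    exact R.unstarved_succ hj (hnormal (t + 1) (by omega) le_rfl)
      (ih (by omega) fun j' h1 h2 => hnormal j' h1 (by omega))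

end PJRExactRun

end

theorem eager_implies_exists_normal_general {C : Type*} [DecidableEq C] {n k : ℕ}
    (A : Fin n → Finset C) (R : PJRExactRun n k A)
    (j : ℕ) (hjk : j ≤ k - 1)
    (hnormal : ∀ j' : ℕ, 1 ≤ j' → j' ≤ j → NormalIteration R j')
    (c₁ : C)
    (heager : EagerState A k (R.f j) (Wset R.w j) c₁) :
    ∃ c₂ : C, c₂ ∉ Wset R.w j ∧ c₂ ≠ c₁ ∧ NormalState A k (R.f j) (Wset R.w j) c₂ := by
  obtain ⟨-, hsupp, hlt⟩ := heager
  have hj : j ≤ k := by omega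
  set W := Wset R.w j
  set U := univ.biUnion A \ W
  have hU : ∀ i, ∀ c ∈ A i, c ∉ W → c ∈ U := fun i c hc hcW =>
    mem_sdiff.mpr ⟨mem_biUnion.mpr ⟨i, mem_univ i, hc⟩, hcW⟩
  obtain ⟨i, c, hc, hcW, hpos⟩ := exists_dissat_pos_of_sum_sub_gfun_lt (hlt.trans_le hsupp)
  obtain ⟨c₀, hc₀, hmax⟩ := exists_max_image U (dissat A k W) ⟨c, hU i c hc hcW⟩
  have hc₀W : c₀ ∉ W := (mem_sdiff.mp hc₀).2
  have hnormal₀ := (R.unstarved hj hnormal).normalState_of_forall_dissat_le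
    (R.f_nonneg_of_le hj) hc₀W
    (fun i _ => Finset.sup_le fun c hc => hmax c (hU i c (mem_sdiff.mp hc).1 (mem_sdiff.mp hc).2))
    (hpos.trans_le (hmax c (hU i c hc hcW)))
  refine ⟨c₀, hc₀W, ?_, hnormal₀⟩
  rintro rfl
  exact hlt.not_ge hnormal₀.2

/-- Theorem "no eager" of the paper: after `j` normal iterations
(0 ≤ j ≤ k−1), if some unelected candidate is in an eager state then some other
unelected candidate is in a normal state. -/
theorem eager_implies_exists_normal {C : Type*} [Fintype C] [DecidableEq C] {n k : ℕ}
    (hn : 0 < n) (hk : 1 ≤ k) (hkC : k ≤ Fintype.card C)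
    (A : Fin n → Finset C) (R : PJRExactRun n k A)
    (j : ℕ) (hjk : j ≤ k - 1)
    (hnormal : ∀ j' : ℕ, 1 ≤ j' → j' ≤ j → NormalIteration R j')
    (c₁ : C) (hc₁ : c₁ ∉ Wset R.w j)
    (heager : EagerState A k (R.f j) (Wset R.w j) c₁) :
    ∃ c₂ : C, c₂ ∉ Wset R.w j ∧ c₂ ≠ c₁ ∧ NormalState A k (R.f j) (Wset R.w j) c₂ :=
  eager_implies_exists_normal_general A R j hjk hnormal c₁ heager
end

section
/- Consider the election with n = 10 voters, candidates C = {c_1,…,c_8}, target committee size k = 7, and ballots A_i = {c_i} for i = 1,…,4 and A_i = {c_5, c_6, c_7, c_8} for i = 5,…,10. Then the set of voters {5,6,7,8,9,10} is 4-cohesive, and every committee W output by some execution of HareAV (for any choice of which votes to remove at each step) satisfies |W ∩ {c_5, c_6, c_7, c_8}| ≤ 3; consequently HareAV fails EJR on this election regardless of the tie-breaking rule used. -/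
open Finset

variable {C : Type*} [Fintype C] [DecidableEq C]

/-- An execution of HareAV: at each step a most-approved (among remaining votes)
unelected candidate is added, and then `min(⌈n/k⌉, #remaining approvers)` of the
remaining votes approving it are removed; the choices of winner (among maximizers)
and of removed votes are unconstrained. -/
structure HareAVRun (n k : ℕ) (A : Fin n → Finset C) where
  w : ℕ → C
  /-- `S j` is the set of votes remaining after step `j` -/
  S : ℕ → Finset (Fin n)
  S_zero : S 0 = Finset.univ
  w_new : ∀ j, 1 ≤ j → j ≤ k → w j ∉ Wset w (j - 1)
  w_max : ∀ j, 1 ≤ j → j ≤ k → ∀ c : C, c ∉ Wset w (j - 1) →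
    ((S (j - 1)).filter (fun i => c ∈ A i)).card ≤
      ((S (j - 1)).filter (fun i => w j ∈ A i)).card
  S_subset : ∀ j, 1 ≤ j → j ≤ k → S j ⊆ S (j - 1)
  removed_approve : ∀ j, 1 ≤ j → j ≤ k → ∀ i ∈ S (j - 1), i ∉ S j → w j ∈ A i
  removed_card : ∀ j, 1 ≤ j → j ≤ k →
    (S (j - 1) \ S j).card =
      min (Nat.ceil ((n : ℚ) / (k : ℚ))) ((S (j - 1)).filter (fun i => w j ∈ A i)).card

/-- The ballot profile of Example 1: `n = 10`, `k = 7`, `C = {c_1, …, c_8}`,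
`A_i = {c_i}` for `i = 1, …, 4` and `A_i = {c_5, c_6, c_7, c_8}` for `i = 5, …, 10`
(candidate `c_t` is represented by `t - 1 : Fin 8`, voter `i` by `i - 1 : Fin 10`). -/
def exampleA : Fin 10 → Finset (Fin 8) := fun i =>
  if h : (i : ℕ) < 4 then {⟨(i : ℕ), by omega⟩} else {4, 5, 6, 7}


/-!
Every time HareAV elects one of the four candidates `c_5, …, c_8` it removes `⌈10/7⌉ = 2` of
the six votes approving them, so after three such elections none of these votes is left. If
the fourth one were elected as well, some `c_t` with `t ≤ 4` would still be unelected at that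
point (only seven seats exist), and the vote of voter `t` would give `c_t` a support of `1 > 0`,
contradicting the greedy choice.
-/

lemma Wset_zero {α : Type*} [DecidableEq α] (w : ℕ → α) : Wset w 0 = ∅ := rfl

lemma Wset_succ_s9 {α : Type*} [DecidableEq α] (w : ℕ → α) (j : ℕ) :
    Wset w (j + 1) = insert (w (j + 1)) (Wset w j) := by
  rw [Wset, Wset, ← insert_Icc_right_eq_Icc_add_one (by omega), image_insert]

lemma Wset_mono {α : Type*} [DecidableEq α] (w : ℕ → α) {j j' : ℕ} (h : j ≤ j') :
    Wset w j ⊆ Wset w j' :=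
  image_subset_image (Icc_subset_Icc_right h)

lemma mem_Wset {α : Type*} [DecidableEq α] (w : ℕ → α) {j k : ℕ} (h₁ : 1 ≤ j) (h₂ : j ≤ k) :
    w j ∈ Wset w k :=
  mem_image_of_mem w (mem_Icc.2 ⟨h₁, h₂⟩)

lemma card_Wset_le {α : Type*} [DecidableEq α] (w : ℕ → α) (j : ℕ) : #(Wset w j) ≤ j :=
  card_image_le.trans (by simp)

namespace HareAVRun

variable {α : Type*} [DecidableEq α] {n k : ℕ} {A : Fin n → Finset α} (E : HareAVRun n k A)

def score (j : ℕ) (c : α) : ℕ := #((E.S j).filter (fun i => c ∈ A i))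

lemma score_zero (c : α) : E.score 0 c = #(approvers A c) := by
  rw [score, E.S_zero, approvers]

lemma score_congr {c c' : α} (h : ∀ i, c ∈ A i ↔ c' ∈ A i) (j : ℕ) :
    E.score j c = E.score j c' := by
  simp only [score, h]

lemma score_le_score_winner {j : ℕ} (hj : j < k) {c : α} (hc : c ∉ Wset E.w j) :
    E.score j c ≤ E.score j (E.w (j + 1)) := by
  simpa [score] using E.w_max (j + 1) (by omega) hj c (by simpa using hc)

lemma winner_mem_of_mem_removed {j : ℕ} (hj : j < k) {i : Fin n}
    (hi : i ∈ E.S j \ E.S (j + 1)) : E.w (j + 1) ∈ A i :=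
  E.removed_approve (j + 1) (by omega) hj i (by simpa using (mem_sdiff.1 hi).1) (mem_sdiff.1 hi).2

lemma card_removed {j : ℕ} (hj : j < k) :
    #(E.S j \ E.S (j + 1)) = min ⌈(n : ℚ) / k⌉₊ (E.score j (E.w (j + 1))) := by
  simpa [score] using E.removed_card (j + 1) (by omega) hj

lemma score_succ {j : ℕ} (hj : j < k) (c : α) :
    E.score (j + 1) c = E.score j c - #((E.S j \ E.S (j + 1)).filter (fun i => c ∈ A i)) := by
  have hsub : E.S (j + 1) ⊆ E.S j := by simpa using E.S_subset (j + 1) (by omega) hj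
  have hsplit : (E.S (j + 1)).filter (fun i => c ∈ A i)
      = (E.S j).filter (fun i => c ∈ A i) \ (E.S j \ E.S (j + 1)).filter (fun i => c ∈ A i) := by
    ext i
    simp only [mem_filter, mem_sdiff]
    have := @hsub i
    tauto
  rw [score, score, hsplit, card_sdiff_of_subset (filter_subset_filter _ sdiff_subset)]

lemma score_succ_winner {j : ℕ} (hj : j < k) :
    E.score (j + 1) (E.w (j + 1))
      = E.score j (E.w (j + 1)) - min ⌈(n : ℚ) / k⌉₊ (E.score j (E.w (j + 1))) := by
  rw [score_succ E hj, filter_true_of_mem fun i => E.winner_mem_of_mem_removed hj,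
    E.card_removed hj]

lemma score_succ_of_disjoint {j : ℕ} (hj : j < k) {c : α}
    (hc : ∀ i, c ∈ A i → E.w (j + 1) ∉ A i) : E.score (j + 1) c = E.score j c := by
  rw [score_succ E hj, filter_eq_empty_iff.2, card_empty, Nat.sub_zero]
  exact fun i hi hci => hc i hci (E.winner_mem_of_mem_removed hj hi)

lemma score_eq_score_zero {c : α} (hc : ∀ j < k, ∀ i, c ∈ A i → E.w (j + 1) ∉ A i) :
    ∀ j ≤ k, E.score j c = E.score 0 c := by
  intro j hj
  induction j with
  | zero => rfl
  | succ j ih => rw [E.score_succ_of_disjoint hj (hc j hj), ih (by omega)]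

end HareAVRun

lemma ceil_ten_div_seven : ⌈((10 : ℕ) : ℚ) / ((7 : ℕ) : ℚ)⌉₊ = 2 := by
  norm_num [Nat.ceil_eq_iff]

lemma exampleA_exclusive : ∀ t c : Fin 8, t ∉ ({4, 5, 6, 7} : Finset (Fin 8)) → c ≠ t →
    ∀ i, t ∈ exampleA i → c ∉ exampleA i := by
  decide

lemma mem_exampleA_iff_of_big : ∀ c ∈ ({4, 5, 6, 7} : Finset (Fin 8)), ∀ i,
    c ∈ exampleA i ↔ (4 : Fin 8) ∈ exampleA i := by
  decide

lemma exampleA_of_four_le : ∀ i : Fin 10, 4 ≤ (i : ℕ) → exampleA i = {4, 5, 6, 7} := by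
  decide

lemma card_approvers_exampleA_small : ∀ t ∉ ({4, 5, 6, 7} : Finset (Fin 8)),
    #(approvers exampleA t) = 1 := by
  decide

lemma card_approvers_exampleA_four : #(approvers exampleA 4) = 6 := by
  decide

lemma cohesive_exampleA : Cohesive exampleA 7 4 (univ.filter (fun i : Fin 10 => 4 ≤ (i : ℕ))) := by
  refine ⟨?_, by decide⟩
  rw [show #(univ.filter (fun i : Fin 10 => 4 ≤ (i : ℕ))) = 6 by decide]
  norm_num

lemma HareAVRun.score_four_add_two_mul_card_big (E : HareAVRun 10 7 exampleA) {t : Fin 8}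
    (ht : t ∉ ({4, 5, 6, 7} : Finset (Fin 8))) (htW : t ∉ Wset E.w 7) :
    ∀ j ≤ 7, E.score j 4 + 2 * #(Wset E.w j ∩ {4, 5, 6, 7}) = 6 := by
  have hscore_t : ∀ j ≤ 7, E.score j t = 1 := by
    intro j hj
    rw [E.score_eq_score_zero (fun j hj i hti hw => ?_) j hj, E.score_zero,
      card_approvers_exampleA_small t ht]
    exact exampleA_exclusive t _ ht (fun h => htW (h ▸ mem_Wset E.w (by omega) hj)) i hti hw
  intro j hj
  induction j with
  | zero => rw [E.score_zero, card_approvers_exampleA_four, Wset_zero, empty_inter, card_empty]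
  | succ j ih =>
    have hj' : j < 7 := by omega
    have hnew : E.w (j + 1) ∉ Wset E.w j := by simpa using E.w_new (j + 1) (by omega) hj'
    have hinv := ih (by omega)
    rw [Wset_succ_s9]
    by_cases hbig : E.w (j + 1) ∈ ({4, 5, 6, 7} : Finset (Fin 8))
    · have hsame := E.score_congr (mem_exampleA_iff_of_big _ hbig)
      have hmax := E.score_le_score_winner hj' (fun h => htW (Wset_mono E.w (by omega) h))
      -- `c_t` keeps support 1, so the even number `E.score j 4` is positive, hence at least 2
      rw [hscore_t j (by omega), hsame] at hmax
      rw [insert_inter_of_mem hbig, card_insert_of_notMem (fun h => hnew (mem_inter.1 h).1),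
        ← hsame, E.score_succ_winner hj', hsame, ceil_ten_div_seven]
      omega
    · have h4 : (4 : Fin 8) ≠ E.w (j + 1) := fun h => hbig (h ▸ by decide)
      rw [insert_inter_of_notMem hbig, E.score_succ_of_disjoint hj'
        (fun i h4i hw => exampleA_exclusive _ 4 hbig h4 i hw h4i)]
      exact hinv

lemma HareAVRun.card_Wset_inter_big_le (E : HareAVRun 10 7 exampleA) :
    #(Wset E.w 7 ∩ {4, 5, 6, 7}) ≤ 3 := by
  by_cases hsmall : ∃ t ∉ ({4, 5, 6, 7} : Finset (Fin 8)), t ∉ Wset E.w 7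
  · obtain ⟨t, ht, htW⟩ := hsmall
    have := E.score_four_add_two_mul_card_big ht htW 7 le_rfl
    omega
  · push Not at hsmall
    have hcompl : ({4, 5, 6, 7} : Finset (Fin 8))ᶜ ⊆ Wset E.w 7 \ {4, 5, 6, 7} := fun t ht =>
      mem_sdiff.2 ⟨hsmall t (mem_compl.1 ht), mem_compl.1 ht⟩
    have hsmall_card : #({4, 5, 6, 7} : Finset (Fin 8))ᶜ = 4 := by decide
    have hsplit := card_inter_add_card_sdiff (Wset E.w 7) {4, 5, 6, 7}
    have := card_le_card hcompl
    have := card_Wset_le E.w 7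
    omega

/-- in Example 1 the last six voters form a 4-cohesive group, yet every
execution of HareAV elects at most 3 of `{c_5, c_6, c_7, c_8}`; hence HareAV fails EJR
on this election regardless of tie-breaking. -/
theorem hareAV_fails_EJR :
    Cohesive exampleA 7 4 (Finset.univ.filter (fun i : Fin 10 => 4 ≤ (i : ℕ))) ∧
    ∀ E : HareAVRun 10 7 exampleA,
      (Wset E.w 7 ∩ ({4, 5, 6, 7} : Finset (Fin 8))).card ≤ 3 ∧
      ¬ ProvidesEJR exampleA 7 (Wset E.w 7) := by
  refine ⟨cohesive_exampleA, fun E => ⟨E.card_Wset_inter_big_le, fun hEJR => ?_⟩⟩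
  obtain ⟨i, hi, hcard⟩ := hEJR 4 (by norm_num) (by norm_num) _ cohesive_exampleA
  rw [exampleA_of_four_le i (mem_filter.1 hi).2, inter_comm] at hcard
  have := E.card_Wset_inter_big_le
  omega
end
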